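/- Let $p \in (0,1)$, $\epsilon > 0$, $m \geq 1$, and $b = \lceil \ln(2m/p)/(2\epsilon^2) \rceil$. Then for any collection of nonnegative values $a_1, \ldots, a_n$ with sum $S > 0$ and any $m$ query subsets, with probability at least $1 - p$ the Aggregate Lineage estimator $Q'_j$ satisfies: for every $j$ with true value $Q_j \geq \rho S$ (where $\rho > \epsilon$), $(1 - \epsilon/\rho) Q_j \leq Q'_j \leq (1 + \epsilon/\rho) Q_j$. -/

import Mathlib

open MeasureTheory ProbabilityTheory Real


/-- Hoeffding's lemma, Bernoulli case: `log (1 - q + q * exp t) ≤ t*q + t^2/8`. -/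
lemma bernoulli_log_mgf_le (q : ℝ) (hq0 : 0 ≤ q) (hq1 : q ≤ 1) (t : ℝ) :
    Real.log (1 - q + q * Real.exp t) ≤ t * q + t ^ 2 / 8 := by
  set D : ℝ → ℝ := fun t => 1 - q + q * Real.exp t with hD_def
  have hD : ∀ s : ℝ, 0 < D s := by
    intro s
    rcases eq_or_lt_of_le hq0 with h | h
    · simp [hD_def, ← h]
    · have := exp_pos s
      have : 0 < q * Real.exp s := mul_pos h this
      simp only [hD_def]
      nlinarith
  set g : ℝ → ℝ := fun s => q + s / 4 - q * Real.exp s / D s with hg_def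
  set f : ℝ → ℝ := fun s => s * q + s ^ 2 / 8 - Real.log (D s) with hf_def
  have hDd : ∀ s, HasDerivAt D (q * Real.exp s) s := by
    intro s
    have h1 : HasDerivAt (fun s : ℝ => Real.exp s) (Real.exp s) s := Real.hasDerivAt_exp s
    have h2 := (h1.const_mul q).const_add (1 - q)
    simpa [hD_def] using h2
  have hfd : ∀ s, HasDerivAt f (g s) s := by
    intro s
    have h1 : HasDerivAt (fun s : ℝ => s * q + s ^ 2 / 8) (q + s / 4) s := by
      have := ((hasDerivAt_id s).mul_const q).add (((hasDerivAt_pow 2 s)).div_const 8)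
      exact this.congr_deriv (by norm_num; ring)
    have h2 : HasDerivAt (fun s => Real.log (D s)) (q * Real.exp s / D s) s :=
      (hDd s).log (hD s).ne'
    exact h1.sub h2
  have hgd : ∀ s, HasDerivAt g (1 / 4 - (q * Real.exp s * D s - q * Real.exp s * (q * Real.exp s)) / (D s) ^ 2) s := by
    intro s
    have h1 : HasDerivAt (fun s : ℝ => q + s / 4) (1 / 4) s := by
      simpa using ((hasDerivAt_id s).div_const 4).const_add q
    have h2 : HasDerivAt (fun s => q * Real.exp s / D s)
        ((q * Real.exp s * D s - q * Real.exp s * (q * Real.exp s)) / (D s) ^ 2) s :=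
      ((Real.hasDerivAt_exp s).const_mul q).div (hDd s) (hD s).ne'
    exact h1.sub h2
  have hg_deriv_nonneg : ∀ s, 0 ≤ 1 / 4 - (q * Real.exp s * D s - q * Real.exp s * (q * Real.exp s)) / (D s) ^ 2 := by
    intro s
    set u : ℝ := q * Real.exp s / D s with hu_def
    have hD2 : (0:ℝ) < (D s) ^ 2 := pow_pos (hD s) 2
    have halg : ∀ E d : ℝ, d ≠ 0 → (E * d - E * E) / d ^ 2 = (E / d) * (1 - E / d) := by
      intro E d hd; field_simp
    have hexpr : (q * Real.exp s * D s - q * Real.exp s * (q * Real.exp s)) / (D s) ^ 2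
        = u * (1 - u) := halg _ _ (hD s).ne'
    rw [hexpr]
    have hu0 : 0 ≤ u := div_nonneg (mul_nonneg hq0 (exp_pos s).le) (hD s).le
    have hu1 : u ≤ 1 := by
      rw [hu_def, div_le_one (hD s)]
      simp only [hD_def]
      nlinarith
    nlinarith [sq_nonneg (u - 1/2)]
  have hg_mono : Monotone g := by
    apply monotone_of_deriv_nonneg
    · exact fun s => (hgd s).differentiableAt
    · intro s
      rw [(hgd s).deriv]
      exact hg_deriv_nonneg s
  have hg0 : g 0 = 0 := by
    simp only [hg_def, hD_def]
    rw [Real.exp_zero]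
    field_simp
    ring
  have hf0 : f 0 = 0 := by
    simp [hf_def, hD_def]
  have hfd_diff : Differentiable ℝ f := fun s => (hfd s).differentiableAt
  have key : 0 ≤ f t := by
    rcases le_total 0 t with ht | ht
    · have : f 0 ≤ f t := by
        apply monotoneOn_of_deriv_nonneg (convex_Ici 0) (hfd_diff.continuous.continuousOn)
          (fun s _ => (hfd s).differentiableAt.differentiableWithinAt) ?_ Set.self_mem_Ici ht ht
        intro s hs
        rw [(hfd s).deriv]
        have : (0:ℝ) ≤ s := le_of_lt (by simpa using hs)
        calc (0:ℝ) = g 0 := hg0.symm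
          _ ≤ g s := hg_mono this
      linarith [hf0 ▸ this]
    · have : f t ≥ f 0 := by
        apply antitoneOn_of_deriv_nonpos (convex_Iic 0) (hfd_diff.continuous.continuousOn)
          (fun s _ => (hfd s).differentiableAt.differentiableWithinAt) ?_ ht Set.self_mem_Iic ht
        intro s hs
        rw [(hfd s).deriv]
        have hs0 : s ≤ (0:ℝ) := le_of_lt (by simpa using hs)
        calc g s ≤ g 0 := hg_mono hs0
          _ = 0 := hg0
      linarith [hf0 ▸ this]
  have : Real.log (D t) ≤ t * q + t ^ 2 / 8 := by
    simp only [hf_def] at key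
    linarith
  simpa [hD_def] using this


lemma bernoulli_mgf_exp_le (q : ℝ) (hq0 : 0 ≤ q) (hq1 : q ≤ 1) (t : ℝ) :
    Real.exp (-(t * q)) * (1 - q + q * Real.exp t) ≤ Real.exp (t ^ 2 / 8) := by
  have hD : 0 < 1 - q + q * Real.exp t := by
    rcases eq_or_lt_of_le hq0 with h | h
    · simp [← h]
    · nlinarith [exp_pos t, mul_pos h (exp_pos t)]
  have h1 : 1 - q + q * Real.exp t ≤ Real.exp (t * q + t ^ 2 / 8) := by
    calc 1 - q + q * Real.exp t = Real.exp (Real.log (1 - q + q * Real.exp t)) :=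
          (Real.exp_log hD).symm
      _ ≤ Real.exp (t * q + t ^ 2 / 8) :=
          Real.exp_le_exp.mpr (bernoulli_log_mgf_le q hq0 hq1 t)
  calc Real.exp (-(t * q)) * (1 - q + q * Real.exp t)
      ≤ Real.exp (-(t * q)) * Real.exp (t * q + t ^ 2 / 8) := by
        exact mul_le_mul_of_nonneg_left h1 (exp_pos _).le
    _ = Real.exp (t ^ 2 / 8) := by rw [← Real.exp_add]; ring_nf

lemma chernoff_bernoulli_sum {Ω : Type*} [MeasurableSpace Ω] (μ : Measure Ω)
    [IsProbabilityMeasure μ] {ι : Type*} [Fintype ι] (Y : ι → Ω → ℝ)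
    (hmeasY : ∀ k, Measurable (Y k))
    (hindepY : iIndepFun Y μ)
    (hint : ∀ k t, Integrable (fun ω => Real.exp (t * Y k ω)) μ)
    (q : ℝ) (hq0 : 0 ≤ q) (hq1 : q ≤ 1)
    (hmgf : ∀ k t, mgf (Y k) μ t = 1 - q + q * Real.exp t)
    (ε : ℝ) (hε : 0 < ε) :
    (μ {ω | (Fintype.card ι : ℝ) * (q + ε) ≤ ∑ k, Y k ω}).toReal ≤
        Real.exp (-2 * (Fintype.card ι : ℝ) * ε ^ 2) ∧
    (μ {ω | ∑ k, Y k ω ≤ (Fintype.card ι : ℝ) * (q - ε)}).toReal ≤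
        Real.exp (-2 * (Fintype.card ι : ℝ) * ε ^ 2) := by
  set N : ℕ := Fintype.card ι with hN
  have hmgfZ : ∀ t : ℝ, mgf (∑ k, Y k) μ t = (1 - q + q * Real.exp t) ^ N := by
    intro t
    rw [hindepY.mgf_sum hmeasY Finset.univ,
      Finset.prod_congr rfl (fun k _ => hmgf k t), Finset.prod_const, Finset.card_univ]
  have hZint : ∀ t : ℝ, Integrable (fun ω => Real.exp (t * (∑ k, Y k) ω)) μ := fun t =>
    hindepY.integrable_exp_mul_sum hmeasY (fun k _ => hint k t)
  have hDpos : ∀ t : ℝ, 0 < 1 - q + q * Real.exp t := by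
    intro t
    rcases eq_or_lt_of_le hq0 with h | h
    · simp [← h]
    · nlinarith [exp_pos t, mul_pos h (exp_pos t)]
  have hsum_apply : ∀ ω, (∑ k, Y k) ω = ∑ k, Y k ω := by
    intro ω; simp [Finset.sum_apply]
  have key : ∀ t c : ℝ, Real.exp (-(t * (q + c))) * (1 - q + q * Real.exp t) ≤
      Real.exp (t ^ 2 / 8 - t * c) := by
    intro t c
    have h := bernoulli_mgf_exp_le q hq0 hq1 t
    calc Real.exp (-(t * (q + c))) * (1 - q + q * Real.exp t)
        = Real.exp (-(t * c)) * (Real.exp (-(t * q)) * (1 - q + q * Real.exp t)) := by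
          rw [← mul_assoc, ← Real.exp_add]; ring_nf
      _ ≤ Real.exp (-(t * c)) * Real.exp (t ^ 2 / 8) :=
          mul_le_mul_of_nonneg_left h (exp_pos _).le
      _ = Real.exp (t ^ 2 / 8 - t * c) := by rw [← Real.exp_add]; ring_nf
  constructor
  · -- upper tail, t = 4ε
    have h := measure_ge_le_exp_mul_mgf (X := ∑ k, Y k) (μ := μ) ((N : ℝ) * (q + ε))
      (t := 4 * ε) (by positivity) (hZint _)
    rw [hmgfZ] at h
    have hset : {ω | (N : ℝ) * (q + ε) ≤ (∑ k, Y k) ω} =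
        {ω | (N : ℝ) * (q + ε) ≤ ∑ k, Y k ω} := by
      ext ω; simp [hsum_apply]
    rw [hset] at h
    refine h.trans ?_
    have hb : Real.exp (-(4 * ε) * ((N:ℝ) * (q + ε))) * (1 - q + q * Real.exp (4 * ε)) ^ N
        = (Real.exp (-((4*ε) * (q + ε))) * (1 - q + q * Real.exp (4 * ε))) ^ N := by
      rw [mul_pow, ← Real.exp_nat_mul]
      ring_nf
    rw [hb]
    calc (Real.exp (-((4*ε) * (q + ε))) * (1 - q + q * Real.exp (4 * ε))) ^ N
        ≤ (Real.exp ((4*ε) ^ 2 / 8 - (4*ε) * ε)) ^ N := by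
          exact pow_le_pow_left₀ (mul_nonneg (exp_pos _).le (hDpos _).le) (key (4*ε) ε) N
      _ = Real.exp (-2 * (N:ℝ) * ε ^ 2) := by
          rw [← Real.exp_nat_mul]; ring_nf
  · -- lower tail, t = -4ε
    have h := measure_le_le_exp_mul_mgf (X := ∑ k, Y k) (μ := μ) ((N : ℝ) * (q - ε))
      (t := -(4 * ε)) (by linarith) (hZint _)
    rw [hmgfZ] at h
    have hset : {ω | (∑ k, Y k) ω ≤ (N : ℝ) * (q - ε)} =
        {ω | ∑ k, Y k ω ≤ (N : ℝ) * (q - ε)} := by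
      ext ω; simp [hsum_apply]
    rw [hset] at h
    refine h.trans ?_
    have hb : Real.exp (-(-(4 * ε)) * ((N:ℝ) * (q - ε))) * (1 - q + q * Real.exp (-(4 * ε))) ^ N
        = (Real.exp (-((-(4*ε)) * (q + -ε))) * (1 - q + q * Real.exp (-(4 * ε)))) ^ N := by
      rw [mul_pow, ← Real.exp_nat_mul]
      ring_nf
    rw [hb]
    calc (Real.exp (-((-(4*ε)) * (q + -ε))) * (1 - q + q * Real.exp (-(4 * ε)))) ^ N
        ≤ (Real.exp ((-(4*ε)) ^ 2 / 8 - (-(4*ε)) * (-ε))) ^ N := by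
          exact pow_le_pow_left₀ (mul_nonneg (exp_pos _).le (hDpos _).le) (key (-(4*ε)) (-ε)) N
      _ = Real.exp (-2 * (N:ℝ) * ε ^ 2) := by
          rw [← Real.exp_nat_mul]; ring_nf

set_option maxHeartbeats 1000000 in
/-- Multiplicative corollary of the main theorem: with probability at least `1 - p`, every
query whose true value is at least `ρ S` (where `ρ > ε`) is approximated within relative
error `ε/ρ`. -/
theorem aggregate_lineage_multiplicative
    {Ω : Type*} [MeasurableSpace Ω] (μ : Measure Ω) [IsProbabilityMeasure μ]
    (n m : ℕ) (hn : 0 < n) (hm : 0 < m)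
    (a : Fin n → ℝ) (ha : ∀ i, 0 ≤ a i)
    (S : ℝ) (hS : S = ∑ i, a i) (hSpos : 0 < S)
    (p ε ρ : ℝ) (hp : p ∈ Set.Ioo (0 : ℝ) 1) (hε : 0 < ε) (hρ : ε < ρ)
    (b : ℕ) (hb : b = ⌈Real.log (2 * m / p) / (2 * ε ^ 2)⌉₊) (hbpos : 0 < b)
    (X : Fin b → Ω → Fin n) (hmeas : ∀ k, Measurable (X k))
    (hindep : iIndepFun X μ)
    (hdist : ∀ k i, μ {ω | X k ω = i} = ENNReal.ofReal (a i / S))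
    (I : Fin m → Finset (Fin n))
    (Q : Fin m → ℝ) (hQ : ∀ j, Q j = ∑ i ∈ I j, a i)
    (Q' : Fin m → Ω → ℝ)
    (hQ' : ∀ j ω, Q' j ω = (S / b) * ∑ k, (if X k ω ∈ I j then (1 : ℝ) else 0)) :
    ENNReal.ofReal (1 - p) ≤
      μ {ω | ∀ j, ρ * S ≤ Q j →
        (1 - ε / ρ) * Q j ≤ Q' j ω ∧ Q' j ω ≤ (1 + ε / ρ) * Q j} := by
  obtain ⟨hp0, hp1⟩ := hp
  have hbR : (0:ℝ) < (b:ℝ) := by exact_mod_cast hbpos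
  set δ : ℝ := Real.exp (-2 * (b:ℝ) * ε ^ 2) with hδ_def
  have hδpos : 0 < δ := exp_pos _
  -- key numeric bound : 2 * m * δ ≤ p
  have hmR : (0:ℝ) < (m:ℝ) := by exact_mod_cast hm
  have h2m : (0:ℝ) < 2 * m / p := by positivity
  have hnum : 2 * (m:ℝ) * δ ≤ p := by
    have hceil : Real.log (2 * m / p) / (2 * ε ^ 2) ≤ (b:ℝ) := by
      rw [hb]; exact Nat.le_ceil _
    have hlog : Real.log (2 * m / p) ≤ 2 * ε ^ 2 * (b:ℝ) := by
      rw [div_le_iff₀ (by positivity)] at hceil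
      linarith
    have hδle : δ ≤ p / (2 * m) := by
      have : δ ≤ Real.exp (-Real.log (2 * m / p)) := by
        apply Real.exp_le_exp.mpr; nlinarith
      rw [Real.exp_neg, Real.exp_log h2m] at this
      calc δ ≤ (2 * (m:ℝ) / p)⁻¹ := this
        _ = p / (2 * m) := by rw [inv_div]
    calc 2 * (m:ℝ) * δ ≤ 2 * m * (p / (2 * m)) := by nlinarith
      _ = p := by field_simp
  -- per-query setup
  set Y : Fin m → Fin b → Ω → ℝ := fun j k ω => if X k ω ∈ I j then 1 else 0 with hY_def
  set q : Fin m → ℝ := fun j => Q j / S with hq_def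
  have hQ0 : ∀ j, 0 ≤ Q j := fun j => by
    rw [hQ]; exact Finset.sum_nonneg fun i _ => ha i
  have hQS : ∀ j, Q j ≤ S := fun j => by
    rw [hQ, hS]
    exact Finset.sum_le_sum_of_subset_of_nonneg (Finset.subset_univ _) fun i _ _ => ha i
  have hq0 : ∀ j, 0 ≤ q j := fun j => div_nonneg (hQ0 j) hSpos.le
  have hq1 : ∀ j, q j ≤ 1 := fun j => (div_le_one hSpos).mpr (hQS j)
  have hYmeas : ∀ j k, Measurable (Y j k) := by
    intro j k
    exact (measurable_of_countable (fun i : Fin n => if i ∈ I j then (1:ℝ) else 0)).comp (hmeas k)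
  have hYindep : ∀ j, iIndepFun (Y j) μ := by
    intro j
    exact hindep.comp (fun k (i : Fin n) => if i ∈ I j then (1:ℝ) else 0)
      (fun k => measurable_of_countable _)
  -- the probability of the event X k ∈ I j
  have hμA : ∀ j k, μ {ω | X k ω ∈ I j} = ENNReal.ofReal (q j) := by
    intro j k
    have hUnion : {ω | X k ω ∈ I j} = ⋃ i ∈ I j, {ω | X k ω = i} := by
      ext ω; simp
    rw [hUnion, measure_biUnion_finset ?_ ?_]
    · rw [Finset.sum_congr rfl (fun i _ => hdist k i),
        ← ENNReal.ofReal_sum_of_nonneg (fun i _ => div_nonneg (ha i) hSpos.le)]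
      congr 1
      rw [← Finset.sum_div, ← hQ]
    · intro i _ i' _ hne
      simp only [Function.onFun, Set.disjoint_left]
      intro ω h1 h2
      exact hne (by simp_all)
    · intro i _
      exact hmeas k (MeasurableSet.singleton i)
  -- indicator representation of exp (t * Y)
  have hAmeas : ∀ j k, MeasurableSet {ω | X k ω ∈ I j} := fun j k =>
    hmeas k ((I j : Set (Fin n)).toFinite.measurableSet)
  have hrep : ∀ j k t (ω : Ω), Real.exp (t * Y j k ω) =
      Set.indicator {ω | X k ω ∈ I j} (fun _ => Real.exp t - 1) ω + 1 := by
    intro j k t ω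
    by_cases h : X k ω ∈ I j
    · simp [hY_def, h, Set.indicator_of_mem (show ω ∈ {ω | X k ω ∈ I j} from h)]
    · simp [hY_def, h, Set.indicator_of_notMem (show ω ∉ {ω | X k ω ∈ I j} from h)]
  have hint : ∀ j k t, Integrable (fun ω => Real.exp (t * Y j k ω)) μ := by
    intro j k t
    have : Integrable (fun ω => Set.indicator {ω | X k ω ∈ I j} (fun _ => Real.exp t - 1) ω + 1) μ :=
      (((integrable_const (Real.exp t - 1)).indicator (hAmeas j k)).add (integrable_const 1))
    exact this.congr (Filter.Eventually.of_forall fun ω => (hrep j k t ω).symm)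
  have hmgf : ∀ j k t, mgf (Y j k) μ t = 1 - q j + q j * Real.exp t := by
    intro j k t
    rw [mgf]
    rw [integral_congr_ae (Filter.Eventually.of_forall (hrep j k t))]
    rw [integral_add (((integrable_const (Real.exp t - 1)).indicator (hAmeas j k))) (integrable_const 1)]
    rw [integral_indicator_const _ (hAmeas j k), integral_const]
    simp only [measureReal_def, measure_univ, ENNReal.toReal_one, smul_eq_mul, one_mul]
    rw [hμA j k, ENNReal.toReal_ofReal (hq0 j)]
    ring
  -- Chernoff bounds for each query
  have hchern : ∀ j,
      (μ {ω | (b:ℝ) * (q j + ε) ≤ ∑ k, Y j k ω}).toReal ≤ δ ∧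
      (μ {ω | ∑ k, Y j k ω ≤ (b:ℝ) * (q j - ε)}).toReal ≤ δ := by
    intro j
    have := chernoff_bernoulli_sum μ (Y j) (hYmeas j) (hYindep j) (hint j)
      (q j) (hq0 j) (hq1 j) (hmgf j) ε hε
    simpa [Fintype.card_fin, hδ_def] using this
  -- failure sets
  set F : Fin m → Set Ω := fun j =>
    {ω | (b:ℝ) * (q j + ε) ≤ ∑ k, Y j k ω} ∪ {ω | ∑ k, Y j k ω ≤ (b:ℝ) * (q j - ε)} with hF_def
  have hsummeas : ∀ j, Measurable (fun ω => ∑ k, Y j k ω) := fun j =>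
    Finset.measurable_sum _ (fun k _ => hYmeas j k)
  have hFmeas : ∀ j, MeasurableSet (F j) :=
    fun j => (measurableSet_le measurable_const (hsummeas j)).union
      (measurableSet_le (hsummeas j) measurable_const)
  have hFbound : ∀ j, μ (F j) ≤ ENNReal.ofReal (2 * δ) := by
    intro j
    obtain ⟨h1, h2⟩ := hchern j
    calc μ (F j) ≤ μ {ω | (b:ℝ) * (q j + ε) ≤ ∑ k, Y j k ω}
          + μ {ω | ∑ k, Y j k ω ≤ (b:ℝ) * (q j - ε)} := measure_union_le _ _
      _ ≤ ENNReal.ofReal δ + ENNReal.ofReal δ := by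
          gcongr
          · exact (ENNReal.le_ofReal_iff_toReal_le (measure_ne_top μ _) hδpos.le).mpr h1
          · exact (ENNReal.le_ofReal_iff_toReal_le (measure_ne_top μ _) hδpos.le).mpr h2
      _ = ENNReal.ofReal (2 * δ) := by
          rw [← ENNReal.ofReal_add hδpos.le hδpos.le]; ring_nf
  set G : Set Ω := ⋃ j, F j with hG_def
  have hGmeas : MeasurableSet G := MeasurableSet.iUnion hFmeas
  have hGbound : μ G ≤ ENNReal.ofReal p := by
    calc μ G ≤ ∑ j, μ (F j) := measure_iUnion_fintype_le _ _
      _ ≤ ∑ _j : Fin m, ENNReal.ofReal (2 * δ) := Finset.sum_le_sum fun j _ => hFbound j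
      _ = (m : ENNReal) * ENNReal.ofReal (2 * δ) := by
          rw [Finset.sum_const, Finset.card_univ, Fintype.card_fin, nsmul_eq_mul]
      _ = ENNReal.ofReal ((m:ℝ) * (2 * δ)) := by
          rw [← ENNReal.ofReal_natCast m, ← ENNReal.ofReal_mul (by positivity)]
      _ ≤ ENNReal.ofReal p := by
          apply ENNReal.ofReal_le_ofReal; nlinarith
  -- good event inclusion
  have hsubset : Gᶜ ⊆ {ω | ∀ j, ρ * S ≤ Q j →
      (1 - ε / ρ) * Q j ≤ Q' j ω ∧ Q' j ω ≤ (1 + ε / ρ) * Q j} := by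
    intro ω hω j hρS
    simp only [hG_def, Set.compl_iUnion, Set.mem_iInter] at hω
    have hωj := hω j
    simp only [hF_def, Set.mem_compl_iff, Set.mem_union, Set.mem_setOf_eq, not_or, not_le] at hωj
    obtain ⟨hup, hlo⟩ := hωj
    have hQ'val : Q' j ω = (S / b) * ∑ k, Y j k ω := by
      rw [hQ' j ω]
    have hSb : (0:ℝ) < S / b := by positivity
    have hQq : (S / b) * ((b:ℝ) * q j) = Q j := by
      rw [hq_def]; field_simp; try ring
    have hεclaim : ε * S ≤ (ε / ρ) * Q j := by
      have hρpos : 0 < ρ := lt_trans hε hρ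
      have : ε * (ρ * S) ≤ ε * Q j := by
        apply mul_le_mul_of_nonneg_left hρS hε.le
      calc ε * S = (ε / ρ) * (ρ * S) := by field_simp; try ring
        _ ≤ (ε / ρ) * Q j := by
            apply mul_le_mul_of_nonneg_left hρS (by positivity)
    constructor
    · -- lower bound
      have h1 : (S / b) * ((b:ℝ) * (q j - ε)) ≤ Q' j ω := by
        rw [hQ'val]
        exact mul_le_mul_of_nonneg_left hlo.le hSb.le
      have h2 : (S / b) * ((b:ℝ) * (q j - ε)) = Q j - ε * S := by
        have : (S / b) * ((b:ℝ) * (q j - ε)) = (S / b) * ((b:ℝ) * q j) - (S/b) * ((b:ℝ) * ε) := by ring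
        rw [this, hQq]
        congr 1
        field_simp
        try ring
      rw [h2] at h1
      nlinarith [hεclaim]
    · have h1 : Q' j ω ≤ (S / b) * ((b:ℝ) * (q j + ε)) := by
        rw [hQ'val]
        exact mul_le_mul_of_nonneg_left hup.le hSb.le
      have h2 : (S / b) * ((b:ℝ) * (q j + ε)) = Q j + ε * S := by
        have : (S / b) * ((b:ℝ) * (q j + ε)) = (S / b) * ((b:ℝ) * q j) + (S/b) * ((b:ℝ) * ε) := by ring
        rw [this, hQq]
        congr 1
        field_simp
        try ring
      rw [h2] at h1
      nlinarith [hεclaim]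
  calc ENNReal.ofReal (1 - p) = 1 - ENNReal.ofReal p := by
        rw [ENNReal.ofReal_sub _ hp0.le, ENNReal.ofReal_one]
    _ ≤ 1 - μ G := tsub_le_tsub_left hGbound 1
    _ = μ Gᶜ := (prob_compl_eq_one_sub hGmeas).symm
    _ ≤ _ := measure_mono hsubset
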